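/- Let f be any smooth real function and let u(t,x) be a smooth real-valued solution of the gKN equation with f, such that u_x(t,x) ≠ 0 for all (t,x). Define T₁(t,x) = (1/2)·u_xx²/u_x² + (1/3)·f(u)/u_x² and X₁(t,x) = −u_xxxx·u_xx/u_x² + (1/2)·u_xxx²/u_x² + (2/3)·u_xxx·(3u_xx² + f(u))/u_x³ − (9/8)·u_xx⁴/u_x⁴ + (1/2)·u_xx²·f(u)/u_x⁴ − u_xx·f'(u)/u_x² + (1/6)·f(u)²/u_x⁴, where all derivatives of u are evaluated at (t,x). Then ∂_t T₁(t,x) + ∂_x X₁(t,x) = 0 at every point (t,x). (T₁ is the lowest-order Hamiltonian conserved density of the gKN equation, admitted for arbitrary f.) -/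

import Mathlib

open Real

/-- Partial derivative with respect to the second (spatial) variable. -/
noncomputable def pdx (u : ℝ → ℝ → ℝ) : ℝ → ℝ → ℝ := fun t x => deriv (fun y => u t y) x

/-- Partial derivative with respect to the first (time) variable. -/
noncomputable def pdt (u : ℝ → ℝ → ℝ) : ℝ → ℝ → ℝ := fun t x => deriv (fun s => u s x) t

/-- `u` solves the generalized Krichever-Novikov equation with nonlinearity `f`:
`u_t = u_xxx - (3/2) u_xx^2/u_x + f(u)/u_x`. -/
def isGKN (f : ℝ → ℝ) (u : ℝ → ℝ → ℝ) : Prop :=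
  ∀ t x, pdt u t x =
    pdx (pdx (pdx u)) t x - (3/2) * (pdx (pdx u) t x)^2 / pdx u t x + f (u t x) / pdx u t x

/-- A conservation law: `∂_t T + ∂_x X = 0` at every point. -/
def consLaw (T X : ℝ → ℝ → ℝ) : Prop := ∀ t x, pdt T t x + pdx X t x = 0

/-- The conserved density `T₁ = (1/2) u_xx²/u_x² + (1/3) f(u)/u_x²`. -/
noncomputable def T1 (f : ℝ → ℝ) (u : ℝ → ℝ → ℝ) : ℝ → ℝ → ℝ := fun t x =>
  (1/2) * (pdx (pdx u) t x)^2 / (pdx u t x)^2 + (1/3) * f (u t x) / (pdx u t x)^2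

/-- The flux `X₁` corresponding to `T₁`. -/
noncomputable def X1 (f : ℝ → ℝ) (u : ℝ → ℝ → ℝ) : ℝ → ℝ → ℝ := fun t x =>
  -((pdx (pdx (pdx (pdx u))) t x) * (pdx (pdx u) t x) / (pdx u t x)^2) + (1/2) * (pdx (pdx (pdx u)) t x)^2 / (pdx u t x)^2
    + (2/3) * (pdx (pdx (pdx u)) t x) * (3 * (pdx (pdx u) t x)^2 + f (u t x)) / (pdx u t x)^3
    - (9/8) * (pdx (pdx u) t x)^4 / (pdx u t x)^4 + (1/2) * (pdx (pdx u) t x)^2 * (f (u t x)) / (pdx u t x)^4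
    - (pdx (pdx u) t x) * (deriv f (u t x)) / (pdx u t x)^2 + (1/6) * (f (u t x))^2 / (pdx u t x)^4

/-! By the symmetry of mixed partial derivatives, the gKN equation determines `u_xt` and
`u_xxt` as the first two `x`-derivatives of its right-hand side. Substituting `u_t`, `u_xt`,
`u_xxt` into `∂_t T₁` turns `∂_t T₁ + ∂_x X₁` into a rational expression in
`u_x, …, u_xxxxx, f(u), f'(u), f''(u)` whose denominators are powers of `u_x`, and this
expression vanishes identically. -/

open Function
open scoped ContDiff

section PartialDerivatives

variable {v : ℝ → ℝ → ℝ}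

theorem hasDerivAt_slice_snd {t x : ℝ} (hv : DifferentiableAt ℝ (uncurry v) (t, x)) :
    HasDerivAt (fun y => v t y) (fderiv ℝ (uncurry v) (t, x) (0, 1)) x :=
  hv.hasFDerivAt.comp_hasDerivAt x ((hasDerivAt_const x t).prodMk (hasDerivAt_id x))

theorem hasDerivAt_slice_fst {t x : ℝ} (hv : DifferentiableAt ℝ (uncurry v) (t, x)) :
    HasDerivAt (fun s => v s x) (fderiv ℝ (uncurry v) (t, x) (1, 0)) t := by
  have hpath : HasDerivAt (fun s => (s, x)) ((1 : ℝ), (0 : ℝ)) t :=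
    (hasDerivAt_id t).prodMk (hasDerivAt_const t x)
  exact hv.hasFDerivAt.comp_hasDerivAt t hpath

theorem pdx_eq_fderiv (hv : Differentiable ℝ (uncurry v)) :
    pdx v = fun t x => fderiv ℝ (uncurry v) (t, x) (0, 1) :=
  funext₂ fun t x => (hasDerivAt_slice_snd (hv (t, x))).deriv

theorem pdt_eq_fderiv (hv : Differentiable ℝ (uncurry v)) :
    pdt v = fun t x => fderiv ℝ (uncurry v) (t, x) (1, 0) :=
  funext₂ fun t x => (hasDerivAt_slice_fst (hv (t, x))).deriv

theorem hasDerivAt_pdx (hv : Differentiable ℝ (uncurry v)) (t x : ℝ) :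
    HasDerivAt (fun y => v t y) (pdx v t x) x :=
  (hasDerivAt_slice_snd (hv (t, x))).differentiableAt.hasDerivAt

theorem hasDerivAt_pdt (hv : Differentiable ℝ (uncurry v)) (t x : ℝ) :
    HasDerivAt (fun s => v s x) (pdt v t x) t :=
  (hasDerivAt_slice_fst (hv (t, x))).differentiableAt.hasDerivAt

theorem hasDerivAt_comp_pdx {g : ℝ → ℝ} (hg : Differentiable ℝ g)
    (hv : Differentiable ℝ (uncurry v)) (t x : ℝ) :
    HasDerivAt (fun y => g (v t y)) (deriv g (v t x) * pdx v t x) x :=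
  (hg _).hasDerivAt.comp x (hasDerivAt_pdx hv t x)

theorem hasDerivAt_comp_pdt {g : ℝ → ℝ} (hg : Differentiable ℝ g)
    (hv : Differentiable ℝ (uncurry v)) (t x : ℝ) :
    HasDerivAt (fun s => g (v s x)) (deriv g (v t x) * pdt v t x) t :=
  (hg _).hasDerivAt.comp t (hasDerivAt_pdt hv t x)

theorem contDiff_fderiv_apply {n : WithTop ℕ∞} (hv : ContDiff ℝ (n + 1) (uncurry v))
    (w : ℝ × ℝ) : ContDiff ℝ n (fun p => fderiv ℝ (uncurry v) p w) :=
  (hv.fderiv_right le_rfl).clm_apply contDiff_const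

theorem contDiff_uncurry_pdx {n : WithTop ℕ∞} (hv : ContDiff ℝ (n + 1) (uncurry v)) :
    ContDiff ℝ n (uncurry (pdx v)) := by
  rw [pdx_eq_fderiv (hv.differentiable (by simp))]
  exact contDiff_fderiv_apply hv (0, 1)

theorem pdt_pdx_comm (hv : ContDiff ℝ 2 (uncurry v)) : pdt (pdx v) = pdx (pdt v) := by
  have hv' : Differentiable ℝ (fderiv ℝ (uncurry v)) :=
    (hv.fderiv_right (m := 1) le_rfl).differentiable one_ne_zero
  have hdir : ∀ w, Differentiable ℝ (uncurry fun t x => fderiv ℝ (uncurry v) (t, x) w) :=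
    fun w => (contDiff_fderiv_apply (n := 1) hv w).differentiable one_ne_zero
  have hsecond : ∀ w p z, fderiv ℝ (uncurry fun t x => fderiv ℝ (uncurry v) (t, x) w) p z =
      fderiv ℝ (fderiv ℝ (uncurry v)) p z w := by
    intro w p z
    change fderiv ℝ (fun q => fderiv ℝ (uncurry v) q w) p z = _
    rw [fderiv_clm_apply (hv' p) (differentiableAt_const w)]
    simp
  funext t x
  rw [pdx_eq_fderiv (hv.differentiable (by simp)), pdt_eq_fderiv (hv.differentiable (by simp)),
    pdt_eq_fderiv (hdir (0, 1)), pdx_eq_fderiv (hdir (1, 0))]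
  simp only [hsecond]
  exact hv.contDiffAt.isSymmSndFDerivAt (by simp) _ _

end PartialDerivatives

section GKN

noncomputable def gknRhs (f : ℝ → ℝ) (u : ℝ → ℝ → ℝ) : ℝ → ℝ → ℝ := fun t x =>
  pdx (pdx (pdx u)) t x - (3/2) * (pdx (pdx u) t x)^2 / pdx u t x + f (u t x) / pdx u t x

noncomputable def gknRhsDx (f : ℝ → ℝ) (u : ℝ → ℝ → ℝ) : ℝ → ℝ → ℝ := fun t x =>
  pdx (pdx (pdx (pdx u))) t x
    - 3 * pdx (pdx u) t x * pdx (pdx (pdx u)) t x / pdx u t x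
    + (3/2) * (pdx (pdx u) t x)^3 / (pdx u t x)^2
    + deriv f (u t x)
    - f (u t x) * pdx (pdx u) t x / (pdx u t x)^2

noncomputable def gknRhsDxx (f : ℝ → ℝ) (u : ℝ → ℝ → ℝ) : ℝ → ℝ → ℝ := fun t x =>
  pdx (pdx (pdx (pdx (pdx u)))) t x
    - 3 * ((pdx (pdx (pdx u)) t x)^2 + pdx (pdx u) t x * pdx (pdx (pdx (pdx u))) t x) / pdx u t x
    + (15/2) * (pdx (pdx u) t x)^2 * pdx (pdx (pdx u)) t x / (pdx u t x)^2
    - 3 * (pdx (pdx u) t x)^4 / (pdx u t x)^3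
    + deriv (deriv f) (u t x) * pdx u t x
    - deriv f (u t x) * pdx (pdx u) t x / pdx u t x
    - f (u t x) * pdx (pdx (pdx u)) t x / (pdx u t x)^2
    + 2 * f (u t x) * (pdx (pdx u) t x)^2 / (pdx u t x)^3

variable {f : ℝ → ℝ} {u : ℝ → ℝ → ℝ}

theorem pdx_gknRhs (hf : Differentiable ℝ f) (hu : ContDiff ℝ ∞ (uncurry u))
    (hux : ∀ t x, pdx u t x ≠ 0) : pdx (gknRhs f u) = gknRhsDx f u := by
  have hu₁ : ContDiff ℝ ∞ (uncurry (pdx u)) := contDiff_uncurry_pdx hu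
  have hu₂ : ContDiff ℝ ∞ (uncurry (pdx (pdx u))) := contDiff_uncurry_pdx hu₁
  have hu₃ : ContDiff ℝ ∞ (uncurry (pdx (pdx (pdx u)))) := contDiff_uncurry_pdx hu₂
  funext t x
  have hp := hasDerivAt_pdx (hu₁.differentiable (by simp)) t x
  have hq := hasDerivAt_pdx (hu₂.differentiable (by simp)) t x
  have hr := hasDerivAt_pdx (hu₃.differentiable (by simp)) t x
  have hF := hasDerivAt_comp_pdx hf (hu.differentiable (by simp)) t x
  refine ((hr.sub (((hq.pow 2).const_mul (3/2 : ℝ)).div hp (hux t x))).add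
    (hF.div hp (hux t x))).deriv.trans ?_
  simp only [gknRhsDx, Pi.pow_apply]
  field_simp [hux t x]
  ring

theorem pdx_gknRhsDx (hf : Differentiable ℝ f) (hf' : Differentiable ℝ (deriv f))
    (hu : ContDiff ℝ ∞ (uncurry u)) (hux : ∀ t x, pdx u t x ≠ 0) :
    pdx (gknRhsDx f u) = gknRhsDxx f u := by
  have hu₁ : ContDiff ℝ ∞ (uncurry (pdx u)) := contDiff_uncurry_pdx hu
  have hu₂ : ContDiff ℝ ∞ (uncurry (pdx (pdx u))) := contDiff_uncurry_pdx hu₁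
  have hu₃ : ContDiff ℝ ∞ (uncurry (pdx (pdx (pdx u)))) := contDiff_uncurry_pdx hu₂
  have hu₄ : ContDiff ℝ ∞ (uncurry (pdx (pdx (pdx (pdx u))))) := contDiff_uncurry_pdx hu₃
  funext t x
  have hp2 : (pdx u t x) ^ 2 ≠ 0 := pow_ne_zero 2 (hux t x)
  have hp := hasDerivAt_pdx (hu₁.differentiable (by simp)) t x
  have hq := hasDerivAt_pdx (hu₂.differentiable (by simp)) t x
  have hr := hasDerivAt_pdx (hu₃.differentiable (by simp)) t x
  have hs := hasDerivAt_pdx (hu₄.differentiable (by simp)) t x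
  have hF := hasDerivAt_comp_pdx hf (hu.differentiable (by simp)) t x
  have hF' := hasDerivAt_comp_pdx hf' (hu.differentiable (by simp)) t x
  refine ((((hs.sub (((hq.const_mul (3 : ℝ)).mul hr).div hp (hux t x))).add
    (((hq.pow 3).const_mul (3/2 : ℝ)).div (hp.pow 2) hp2)).add hF').sub
    ((hF.mul hq).div (hp.pow 2) hp2)).deriv.trans ?_
  simp only [gknRhsDxx, Pi.pow_apply, Pi.mul_apply]
  field_simp [hux t x]
  ring

theorem isGKN.pdt_eq (hsol : isGKN f u) : pdt u = gknRhs f u := funext₂ hsol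

theorem isGKN.pdt_pdx_eq (hsol : isGKN f u) (hf : Differentiable ℝ f)
    (hu : ContDiff ℝ ∞ (uncurry u)) (hux : ∀ t x, pdx u t x ≠ 0) :
    pdt (pdx u) = gknRhsDx f u := by
  rw [pdt_pdx_comm (hu.of_le ENat.LEInfty.out), hsol.pdt_eq, pdx_gknRhs hf hu hux]

theorem isGKN.pdt_pdx_pdx_eq (hsol : isGKN f u) (hf : Differentiable ℝ f)
    (hf' : Differentiable ℝ (deriv f)) (hu : ContDiff ℝ ∞ (uncurry u))
    (hux : ∀ t x, pdx u t x ≠ 0) : pdt (pdx (pdx u)) = gknRhsDxx f u := by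
  rw [pdt_pdx_comm ((contDiff_uncurry_pdx (n := ∞) hu).of_le ENat.LEInfty.out),
    hsol.pdt_pdx_eq hf hu hux, pdx_gknRhsDx hf hf' hu hux]

theorem pdt_T1 (hf : Differentiable ℝ f) (hu : ContDiff ℝ ∞ (uncurry u))
    (hux : ∀ t x, pdx u t x ≠ 0) (t x : ℝ) :
    pdt (T1 f u) t x =
      (pdx (pdx u) t x * pdt (pdx (pdx u)) t x * pdx u t x
          - (pdx (pdx u) t x) ^ 2 * pdt (pdx u) t x) / (pdx u t x) ^ 3
        + (deriv f (u t x) * pdt u t x * pdx u t x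
          - 2 * f (u t x) * pdt (pdx u) t x) / (3 * (pdx u t x) ^ 3) := by
  have hu₁ : ContDiff ℝ ∞ (uncurry (pdx u)) := contDiff_uncurry_pdx hu
  have hu₂ : ContDiff ℝ ∞ (uncurry (pdx (pdx u))) := contDiff_uncurry_pdx hu₁
  have hp2 : (pdx u t x) ^ 2 ≠ 0 := pow_ne_zero 2 (hux t x)
  have hp := hasDerivAt_pdt (hu₁.differentiable (by simp)) t x
  have hq := hasDerivAt_pdt (hu₂.differentiable (by simp)) t x
  have hF := hasDerivAt_comp_pdt hf (hu.differentiable (by simp)) t x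
  refine ((((hq.pow 2).const_mul (1/2 : ℝ)).div (hp.pow 2) hp2).add
    ((hF.const_mul (1/3 : ℝ)).div (hp.pow 2) hp2)).deriv.trans ?_
  simp only [Pi.pow_apply]
  field_simp [hux t x]
  ring

theorem isGKN.consLaw_T1_X1 (hsol : isGKN f u) (hf : Differentiable ℝ f)
    (hf' : Differentiable ℝ (deriv f)) (hu : ContDiff ℝ ∞ (uncurry u))
    (hux : ∀ t x, pdx u t x ≠ 0) : consLaw (T1 f u) (X1 f u) := by
  intro t x
  have hu₁ : ContDiff ℝ ∞ (uncurry (pdx u)) := contDiff_uncurry_pdx hu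
  have hu₂ : ContDiff ℝ ∞ (uncurry (pdx (pdx u))) := contDiff_uncurry_pdx hu₁
  have hu₃ : ContDiff ℝ ∞ (uncurry (pdx (pdx (pdx u)))) := contDiff_uncurry_pdx hu₂
  have hu₄ : ContDiff ℝ ∞ (uncurry (pdx (pdx (pdx (pdx u))))) := contDiff_uncurry_pdx hu₃
  have hp2 : (pdx u t x) ^ 2 ≠ 0 := pow_ne_zero 2 (hux t x)
  have hp3 : (pdx u t x) ^ 3 ≠ 0 := pow_ne_zero 3 (hux t x)
  have hp4 : (pdx u t x) ^ 4 ≠ 0 := pow_ne_zero 4 (hux t x)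
  have hp := hasDerivAt_pdx (hu₁.differentiable (by simp)) t x
  have hq := hasDerivAt_pdx (hu₂.differentiable (by simp)) t x
  have hr := hasDerivAt_pdx (hu₃.differentiable (by simp)) t x
  have hs := hasDerivAt_pdx (hu₄.differentiable (by simp)) t x
  have hF := hasDerivAt_comp_pdx hf (hu.differentiable (by simp)) t x
  have hF' := hasDerivAt_comp_pdx hf' (hu.differentiable (by simp)) t x
  have hX := (((((((hs.mul hq).div (hp.pow 2) hp2).neg.add
    (((hr.pow 2).const_mul (1/2 : ℝ)).div (hp.pow 2) hp2)).add
    (((hr.const_mul (2/3 : ℝ)).mul (((hq.pow 2).const_mul (3 : ℝ)).add hF)).div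
      (hp.pow 3) hp3)).sub
    (((hq.pow 4).const_mul (9/8 : ℝ)).div (hp.pow 4) hp4)).add
    ((((hq.pow 2).const_mul (1/2 : ℝ)).mul hF).div (hp.pow 4) hp4)).sub
    ((hq.mul hF').div (hp.pow 2) hp2)).add
    (((hF.pow 2).const_mul (1/6 : ℝ)).div (hp.pow 4) hp4)
  rw [pdt_T1 hf hu hux, hsol.pdt_eq, hsol.pdt_pdx_eq hf hu hux,
    hsol.pdt_pdx_pdx_eq hf hf' hu hux, show pdx (X1 f u) t x = _ from hX.deriv]
  simp only [gknRhs, gknRhsDx, gknRhsDxx, Pi.pow_apply, Pi.mul_apply, Pi.add_apply]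
  field_simp [hux t x]
  ring

end GKN

/-- `(T₁, X₁)` is a conservation law of the gKN equation for arbitrary smooth `f`. -/
theorem gKN_conservation_law_T1 (f : ℝ → ℝ) (hf : ContDiff ℝ (⊤ : ℕ∞) f)
    (u : ℝ → ℝ → ℝ) (hu : ContDiff ℝ (⊤ : ℕ∞) (Function.uncurry u))
    (hux : ∀ t x, pdx u t x ≠ 0)
    (hsol : isGKN f u) :
    consLaw (T1 f u) (X1 f u) :=
  hsol.consLaw_T1_X1 (hf.differentiable (by simp))
    ((contDiff_infty_iff_deriv.mp hf).2.differentiable (by simp)) hu hux
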